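/- arXiv:2410.00604 — 10 statements merged into one kernel-verified Lean document; each statement's English description precedes it below -/
import Mathlib

section
/- Let A be a residuated poset and p ∈ A a positive idempotent. Then the following subsets of A all coincide: {a/p : a ∈ A}, {a ∈ A : a = a/p}, {a ∈ A : a ≤ a/p}, {a ∈ A : a·p ≤ a}, {a ∈ A : a·p = a}, and {a·p : a ∈ A}. Dually, the following subsets all coincide: {p\a : a ∈ A}, {a ∈ A : a = p\a}, {a ∈ A : a ≤ p\a}, {a ∈ A : p·a ≤ a}, {a ∈ A : p·a = a}, and {p·a : a ∈ A}. -/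
/-- A residuated poset: a partially ordered monoid with residuals `ld` (`x \ z`)
and `rd` (`z / y`) satisfying the residuation law. -/
class ResiduatedPoset (α : Type*) extends PartialOrder α, Monoid α where
  ld : α → α → α
  rd : α → α → α
  mul_le_iff_le_rd : ∀ x y z : α, x * y ≤ z ↔ x ≤ rd z y
  mul_le_iff_le_ld : ∀ x y z : α, x * y ≤ z ↔ y ≤ ld x z

open ResiduatedPoset

theorem stmt_0 {α : Type*} [ResiduatedPoset α] (p : α) (hp1 : 1 ≤ p) (hpi : p * p = p) :
    (({x : α | ∃ a : α, x = rd a p} = {a : α | a = rd a p}) ∧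
     ({a : α | a = rd a p} = {a : α | a ≤ rd a p}) ∧
     ({a : α | a ≤ rd a p} = {a : α | a * p ≤ a}) ∧
     ({a : α | a * p ≤ a} = {a : α | a * p = a}) ∧
     ({a : α | a * p = a} = {x : α | ∃ a : α, x = a * p})) ∧
    (({x : α | ∃ a : α, x = ld p a} = {a : α | a = ld p a}) ∧
     ({a : α | a = ld p a} = {a : α | a ≤ ld p a}) ∧
     ({a : α | a ≤ ld p a} = {a : α | p * a ≤ a}) ∧
     ({a : α | p * a ≤ a} = {a : α | p * a = a}) ∧
     ({a : α | p * a = a} = {x : α | ∃ a : α, x = p * a})) := by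
  -- basic consequences of residuation
  have self_le_mulp : ∀ a : α, a ≤ a * p := by
    intro a
    have h : p ≤ ld a (a * p) := (mul_le_iff_le_ld a p (a * p)).mp le_rfl
    have := (mul_le_iff_le_ld a 1 (a * p)).mpr (hp1.trans h)
    simpa using this
  have self_le_pmul : ∀ a : α, a ≤ p * a := by
    intro a
    have h : p ≤ rd (p * a) a := (mul_le_iff_le_rd p a (p * a)).mp le_rfl
    have := (mul_le_iff_le_rd 1 a (p * a)).mpr (hp1.trans h)
    simpa using this
  have rd_le : ∀ a : α, rd a p ≤ a := fun a =>
    (self_le_mulp (rd a p)).trans ((mul_le_iff_le_rd (rd a p) p a).mpr le_rfl)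
  have ld_le : ∀ a : α, ld p a ≤ a := fun a =>
    (self_le_pmul (ld p a)).trans ((mul_le_iff_le_ld p (ld p a) a).mpr le_rfl)
  have rd_idem : ∀ a : α, rd a p * p ≤ rd a p := by
    intro a
    have h : rd a p * p * p ≤ a := by
      rw [mul_assoc, hpi]
      exact (mul_le_iff_le_rd (rd a p) p a).mpr le_rfl
    exact (mul_le_iff_le_rd (rd a p * p) p a).mp h
  have ld_idem : ∀ a : α, p * ld p a ≤ ld p a := by
    intro a
    have h : p * (p * ld p a) ≤ a := by
      rw [← mul_assoc, hpi]
      exact (mul_le_iff_le_ld p (ld p a) a).mpr le_rfl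
    exact (mul_le_iff_le_ld p (p * ld p a) a).mp h
  refine ⟨⟨?_, ?_, ?_, ?_, ?_⟩, ⟨?_, ?_, ?_, ?_, ?_⟩⟩
  · ext x
    constructor
    · rintro ⟨a, rfl⟩
      exact le_antisymm
        ((mul_le_iff_le_rd (rd a p) p (rd a p)).mp (rd_idem a)) (rd_le (rd a p))
    · intro h; exact ⟨x, h⟩
  · ext a
    exact ⟨fun h => h.le, fun h => le_antisymm h (rd_le a)⟩
  · ext a
    exact (mul_le_iff_le_rd a p a).symm
  · ext a
    exact ⟨fun h => le_antisymm h (self_le_mulp a), fun h => h.le⟩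
  · ext x
    constructor
    · intro h; exact ⟨x, h.symm⟩
    · rintro ⟨a, rfl⟩
      show a * p * p = a * p
      rw [mul_assoc, hpi]
  · ext x
    constructor
    · rintro ⟨a, rfl⟩
      exact le_antisymm
        ((mul_le_iff_le_ld p (ld p a) (ld p a)).mp (ld_idem a)) (ld_le (ld p a))
    · intro h; exact ⟨x, h⟩
  · ext a
    exact ⟨fun h => h.le, fun h => le_antisymm h (ld_le a)⟩
  · ext a
    exact (mul_le_iff_le_ld p a a).symm
  · ext a
    exact ⟨fun h => le_antisymm h (self_le_pmul a), fun h => h.le⟩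
  · ext x
    constructor
    · intro h; exact ⟨x, h.symm⟩
    · rintro ⟨a, rfl⟩
      show p * (p * a) = p * a
      rw [← mul_assoc, hpi]
end

section
/- Let A be a residuated poset and p ∈ A a positive idempotent. Then the maps a ↦ p\a and a ↦ a/p are interior operators on (A, ≤): they are monotone, contractive (p\a ≤ a and a/p ≤ a), and idempotent (p\(p\a) = p\a and (a/p)/p = a/p). Moreover they preserve existing meets: if s is the greatest lower bound of a subset X ⊆ A, then p\s is the greatest lower bound of {p\a : a ∈ X}, and s/p is the greatest lower bound of {a/p : a ∈ X}. -/
open ResiduatedPoset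

section
variable {α : Type*} [ResiduatedPoset α]

lemma rp_mul_ld_le (p a : α) : p * ld p a ≤ a :=
  (mul_le_iff_le_ld p (ld p a) a).mpr le_rfl

lemma rp_rd_mul_le (p a : α) : rd a p * p ≤ a :=
  (mul_le_iff_le_rd (rd a p) p a).mpr le_rfl

lemma rp_mul_le_mul_right {x y : α} (z : α) (h : x ≤ y) : x * z ≤ y * z :=
  (mul_le_iff_le_rd x z (y * z)).mpr (h.trans ((mul_le_iff_le_rd y z (y*z)).mp le_rfl))

lemma rp_mul_le_mul_left {x y : α} (z : α) (h : x ≤ y) : z * x ≤ z * y :=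
  (mul_le_iff_le_ld z x (z * y)).mpr (h.trans ((mul_le_iff_le_ld z y (z*y)).mp le_rfl))

end

theorem stmt_6 {α : Type*} [ResiduatedPoset α] (p : α) (hp1 : 1 ≤ p) (hpi : p * p = p) :
    Monotone (fun a : α => ld p a) ∧
    Monotone (fun a : α => rd a p) ∧
    (∀ a : α, ld p a ≤ a) ∧
    (∀ a : α, rd a p ≤ a) ∧
    (∀ a : α, ld p (ld p a) = ld p a) ∧
    (∀ a : α, rd (rd a p) p = rd a p) ∧
    (∀ (X : Set α) (s : α), IsGLB X s → IsGLB ((fun a : α => ld p a) '' X) (ld p s)) ∧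
    (∀ (X : Set α) (s : α), IsGLB X s → IsGLB ((fun a : α => rd a p) '' X) (rd s p)) := by
  have monL : Monotone (fun a : α => ld p a) := by
    intro a b hab
    exact (mul_le_iff_le_ld p _ b).mp ((rp_mul_ld_le p a).trans hab)
  have monR : Monotone (fun a : α => rd a p) := by
    intro a b hab
    exact (mul_le_iff_le_rd _ p b).mp ((rp_rd_mul_le p a).trans hab)
  have conL : ∀ a : α, ld p a ≤ a := fun a => by
    calc ld p a = 1 * ld p a := (one_mul _).symm
    _ ≤ p * ld p a := rp_mul_le_mul_right _ hp1
    _ ≤ a := rp_mul_ld_le p a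
  have conR : ∀ a : α, rd a p ≤ a := fun a => by
    calc rd a p = rd a p * 1 := (mul_one _).symm
    _ ≤ rd a p * p := rp_mul_le_mul_left _ hp1
    _ ≤ a := rp_rd_mul_le p a
  have idemL : ∀ a : α, ld p (ld p a) = ld p a := fun a => by
    refine le_antisymm (conL _) ?_
    refine (mul_le_iff_le_ld p _ _).mp ?_
    refine (mul_le_iff_le_ld p _ _).mp ?_
    rw [← mul_assoc, hpi]
    exact rp_mul_ld_le p a
  have idemR : ∀ a : α, rd (rd a p) p = rd a p := fun a => by
    refine le_antisymm (conR _) ?_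
    refine (mul_le_iff_le_rd _ p _).mp ?_
    refine (mul_le_iff_le_rd _ p _).mp ?_
    rw [mul_assoc, hpi]
    exact rp_rd_mul_le p a
  refine ⟨monL, monR, conL, conR, idemL, idemR, ?_, ?_⟩
  · intro X s hs
    constructor
    · rintro _ ⟨a, ha, rfl⟩
      exact monL (hs.1 ha)
    · intro b hb
      refine (mul_le_iff_le_ld p b s).mp (hs.2 fun a ha => ?_)
      exact (mul_le_iff_le_ld p b a).mpr (hb ⟨a, ha, rfl⟩)
  · intro X s hs
    constructor
    · rintro _ ⟨a, ha, rfl⟩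
      exact monR (hs.1 ha)
    · intro b hb
      refine (mul_le_iff_le_rd b p s).mp (hs.2 fun a ha => ?_)
      exact (mul_le_iff_le_rd b p a).mpr (hb ⟨a, ha, rfl⟩)
end

section
/- In every balanced residuated poset the following inequalities hold for all x, y: x/x ≤ (x·y)/(x·y), x/x ≤ (y·x)/(y·x), x/x ≤ (x/y)/(x/y), and x/x ≤ (y\x)/(y\x). -/
open ResiduatedPoset

lemma rp_mul_le_mul_right_s9 {α : Type*} [ResiduatedPoset α] {a b : α} (h : a ≤ b) (c : α) :
    a * c ≤ b * c := by
  rw [mul_le_iff_le_rd]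
  exact le_trans h ((mul_le_iff_le_rd b c (b * c)).mp le_rfl)

lemma rp_mul_le_mul_left_s9 {α : Type*} [ResiduatedPoset α] {a b : α} (h : a ≤ b) (c : α) :
    c * a ≤ c * b := by
  rw [mul_le_iff_le_ld]
  exact le_trans h ((mul_le_iff_le_ld c b (c * b)).mp le_rfl)

theorem stmt_9 {α : Type*} [ResiduatedPoset α] (hbal : ∀ x : α, ld x x = rd x x)
    (x y : α) :
    rd x x ≤ rd (x * y) (x * y) ∧
    rd x x ≤ rd (y * x) (y * x) ∧
    rd x x ≤ rd (rd x y) (rd x y) ∧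
    rd x x ≤ rd (ld y x) (ld y x) := by
  set e := rd x x with he
  have hex : e * x ≤ x := (mul_le_iff_le_rd e x x).mpr le_rfl
  have hxe : x * e ≤ x := (mul_le_iff_le_ld x e x).mpr (by rw [hbal])
  refine ⟨?_, ?_, ?_, ?_⟩
  · rw [← mul_le_iff_le_rd, ← mul_assoc]
    exact rp_mul_le_mul_right_s9 hex y
  · rw [← hbal (y*x), ← mul_le_iff_le_ld, mul_assoc]
    exact rp_mul_le_mul_left_s9 hxe y
  · rw [← mul_le_iff_le_rd, ← mul_le_iff_le_rd, mul_assoc]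
    exact le_trans (rp_mul_le_mul_left_s9 ((mul_le_iff_le_rd (rd x y) y x).mpr le_rfl) e) hex
  · rw [← hbal (ld y x), ← mul_le_iff_le_ld, ← mul_le_iff_le_ld, ← mul_assoc]
    exact le_trans (rp_mul_le_mul_right_s9 ((mul_le_iff_le_ld y (ld y x) x).mpr le_rfl) e) hxe
end

section
/- Let A be a balanced residuated poset, and write 1_x for the common value x\x = x/x. Consider the conditions: (H1) for all x, y, if 1_x = 1_y then 1_{x·y} = 1_x; (H2) for all x, y, if 1_x = 1_y then 1_{x/y} = 1_x; (H3) for all x, y, if 1_x = 1_y then 1_{x\y} = 1_x. Then A satisfies (H2) if and only if A satisfies (H3), and if A satisfies (H2) (equivalently (H3)) then A satisfies (H1). -/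
open ResiduatedPoset

section RPAux

variable {α : Type*} [ResiduatedPoset α]

private theorem le_rd' {a b c : α} : a * b ≤ c ↔ a ≤ rd c b := mul_le_iff_le_rd a b c
private theorem le_ld' {a b c : α} : a * b ≤ c ↔ b ≤ ld a c := mul_le_iff_le_ld a b c

private theorem rd_mul' (c b : α) : rd c b * b ≤ c := le_rd'.mpr le_rfl
private theorem mul_ld' (a c : α) : a * ld a c ≤ c := le_ld'.mpr le_rfl

private theorem mono_r' (c : α) {a b : α} (h : a ≤ b) : c * a ≤ c * b :=
  le_ld'.mpr (h.trans (le_ld'.mp le_rfl))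
private theorem mono_l' (c : α) {a b : α} (h : a ≤ b) : a * c ≤ b * c :=
  le_rd'.mpr (h.trans (le_rd'.mp le_rfl))

private theorem one_le_rd' (x : α) : (1 : α) ≤ rd x x :=
  le_rd'.mp (by rw [one_mul])

/-- e·x = x for e = x/x -/
private theorem e_mul' (x : α) : rd x x * x = x :=
  le_antisymm (rd_mul' x x)
    (by calc x = 1 * x := (one_mul x).symm
          _ ≤ rd x x * x := mono_l' x (one_le_rd' x))

/-- x·e = x for e = x/x, using balance -/
private theorem mul_e' (hbal : ∀ a : α, ld a a = rd a a) (x : α) : x * rd x x = x := by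
  have h1 : x * rd x x ≤ x := by rw [← hbal]; exact mul_ld' x x
  have h2 : x ≤ x * rd x x := by
    calc x = x * 1 := (mul_one x).symm
      _ ≤ x * rd x x := mono_r' x (one_le_rd' x)
  exact le_antisymm h1 h2

/-- 1_e = e for e = x/x -/
private theorem rd_e_e' (x : α) : rd (rd x x) (rd x x) = rd x x := by
  apply le_antisymm
  · calc rd (rd x x) (rd x x) = rd (rd x x) (rd x x) * 1 := (mul_one _).symm
      _ ≤ rd (rd x x) (rd x x) * rd x x := mono_r' _ (one_le_rd' x)
      _ ≤ rd x x := rd_mul' _ _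
  · apply le_rd'.mp
    apply le_rd'.mp
    rw [mul_assoc, e_mul' x, e_mul' x]

/-- (a\b)/c = a\(b/c) -/
private theorem rd_ld_assoc' (a b c : α) : rd (ld a b) c = ld a (rd b c) := by
  apply le_antisymm
  · apply le_ld'.mp
    apply le_rd'.mp
    have h : a * (rd (ld a b) c * c) ≤ b := (mono_r' a (rd_mul' _ c)).trans (mul_ld' a b)
    rwa [← mul_assoc] at h
  · apply le_rd'.mp
    apply le_ld'.mp
    have h : (a * ld a (rd b c)) * c ≤ b := (mono_l' c (mul_ld' a _)).trans (rd_mul' b c)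
    rwa [mul_assoc] at h

/-- c/(a·b) = (c/b)/a -/
private theorem rd_rd' (c a b : α) : rd c (a * b) = rd (rd c b) a := by
  apply le_antisymm
  · apply le_rd'.mp
    apply le_rd'.mp
    have h := rd_mul' c (a * b)
    rwa [← mul_assoc] at h
  · apply le_rd'.mp
    have h : (rd (rd c b) a * a) * b ≤ c := (mono_l' b (rd_mul' (rd c b) a)).trans (rd_mul' c b)
    rwa [mul_assoc] at h

/-- (a·b)\c = b\(a\c) -/
private theorem ld_ld' (a b c : α) : ld (a * b) c = ld b (ld a c) := by
  apply le_antisymm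
  · apply le_ld'.mp
    apply le_ld'.mp
    have h := mul_ld' (a * b) c
    rwa [mul_assoc] at h
  · apply le_ld'.mp
    have h : a * (b * ld b (ld a c)) ≤ c := (mono_r' a (mul_ld' b (ld a c))).trans (mul_ld' a c)
    rwa [← mul_assoc] at h

/-- b/((b/a)\b) = b/a  (Galois closure) -/
private theorem rd_closure' (b a : α) : rd b (ld (rd b a) b) = rd b a := by
  apply le_antisymm
  · apply le_rd'.mp
    have h1 : a ≤ ld (rd b a) b := le_ld'.mp (rd_mul' b a)
    exact (mono_r' _ h1).trans (rd_mul' b _)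
  · exact le_rd'.mp (mul_ld' (rd b a) b)

/-- (b/(a\b))\b = a\b  (Galois closure, mirror) -/
private theorem ld_closure' (a b : α) : ld (rd b (ld a b)) b = ld a b := by
  apply le_antisymm
  · apply le_ld'.mp
    have h1 : a ≤ rd b (ld a b) := le_rd'.mp (mul_ld' a b)
    exact (mono_l' _ h1).trans (mul_ld' _ b)
  · exact le_ld'.mp (rd_mul' b (ld a b))

/-- ((b/a)·a)/a = b/a  (absorption) -/
private theorem rd_absorb' (b a : α) : rd (rd b a * a) a = rd b a := by
  apply le_antisymm
  · exact le_rd'.mp ((rd_mul' (rd b a * a) a).trans (rd_mul' b a))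
  · exact le_rd'.mp le_rfl

/-- H2 implies H3 -/
private theorem h2_to_h3' (hbal : ∀ a : α, ld a a = rd a a)
    (hH2 : ∀ a b : α, rd a a = rd b b → rd (rd a b) (rd a b) = rd a a)
    (x y : α) (hxy : rd x x = rd y y) :
    rd (ld x y) (ld x y) = rd x x := by
  set e := rd x x with he
  set γ := rd e x with hγdef
  have hex : e * x = x := e_mul' x
  have hxe : x * e = x := mul_e' hbal x
  have hee : rd e e = e := rd_e_e' x
  have hγx : γ * x ≤ e := rd_mul' e x
  have hxγ : x * γ ≤ e := by
    apply le_rd'.mp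
    calc (x * γ) * x = x * (γ * x) := mul_assoc ..
      _ ≤ x * e := mono_r' x hγx
      _ = x := hxe
  have hγγ : rd γ γ = e := by
    have h := hH2 e x (by rw [hee])
    rw [hee] at h
    exact h
  have hldγγ : ld γ γ = e := by rw [hbal]; exact hγγ
  -- Lemma II : (x\e)/γ = e
  have hII : rd (ld x e) γ = e := by
    apply le_antisymm
    · have a1 : rd (ld x e) γ * γ ≤ ld x e := rd_mul' _ γ
      have a2 : x * (rd (ld x e) γ * γ) ≤ e := le_ld'.mpr a1
      have a3 : (x * (rd (ld x e) γ * γ)) * x ≤ x := by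
        calc (x * (rd (ld x e) γ * γ)) * x ≤ e * x := mono_l' x a2
          _ = x := hex
      have a4 : (rd (ld x e) γ * γ) * x ≤ e := by
        have := le_ld'.mp (by rwa [mul_assoc] at a3)
        rwa [hbal x] at this
      have a5 : rd (ld x e) γ * γ ≤ γ := by
        have := le_rd'.mp a4
        rwa [← hγdef] at this
      have a6 := le_rd'.mp a5
      rwa [hγγ] at a6
    · apply le_rd'.mp
      apply le_ld'.mp
      calc x * (e * γ) = (x * e) * γ := (mul_assoc ..).symm
        _ = x * γ := by rw [hxe]
        _ ≤ e := hxγ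
  -- main chain
  have m1 : rd (ld x y) y = ld x e := by
    rw [rd_ld_assoc' x y y, ← hxy]
  have m2 : rd (ld x y) (γ * y) = e := by
    rw [rd_rd' (ld x y) γ y, m1, hII]
  have m3 : ld e (ld x y) = ld x y := by
    apply le_antisymm
    · calc ld e (ld x y) = 1 * ld e (ld x y) := (one_mul _).symm
        _ ≤ e * ld e (ld x y) := mono_l' _ (one_le_rd' x)
        _ ≤ ld x y := mul_ld' e (ld x y)
    · apply le_ld'.mp
      apply le_ld'.mp
      calc x * (e * ld x y) = (x * e) * ld x y := (mul_assoc ..).symm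
        _ = x * ld x y := by rw [hxe]
        _ ≤ y := mul_ld' x y
  have m4 := rd_closure' (ld x y) (γ * y)
  rw [m2, m3] at m4
  exact m4

/-- H3 implies H2 -/
private theorem h3_to_h2' (hbal : ∀ a : α, ld a a = rd a a)
    (hH3 : ∀ a b : α, rd a a = rd b b → rd (ld a b) (ld a b) = rd a a)
    (x y : α) (hxy : rd x x = rd y y) :
    rd (rd x y) (rd x y) = rd x x := by
  set e := rd x x with he
  set δ := ld y e with hδdef
  have hee : rd e e = e := rd_e_e' x
  have hey : e * y = y := by rw [hxy]; exact e_mul' y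
  have hye : y * e = y := by rw [hxy]; exact mul_e' hbal y
  have hyδ : y * δ ≤ e := mul_ld' y e
  have hδy : δ * y ≤ e := by
    have h1 : y * (δ * y) ≤ y := by
      calc y * (δ * y) = (y * δ) * y := (mul_assoc ..).symm
        _ ≤ e * y := mono_l' y hyδ
        _ = y := hey
    have h2 := le_ld'.mp h1
    rwa [hbal y, ← hxy] at h2
  have hδδ : rd δ δ = e := by
    have h := hH3 y e (by rw [hee, hxy])
    rw [← hxy] at h
    exact h
  have hldδδ : ld δ δ = e := by rw [hbal]; exact hδδ
  -- Lemma II mirror : δ\(e/y) = e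
  have hII : ld δ (rd e y) = e := by
    apply le_antisymm
    · have a1 : δ * ld δ (rd e y) ≤ rd e y := mul_ld' δ _
      have a2 : (δ * ld δ (rd e y)) * y ≤ e := le_rd'.mpr a1
      have a3 : y * ((δ * ld δ (rd e y)) * y) ≤ y := by
        calc y * ((δ * ld δ (rd e y)) * y) ≤ y * e := mono_r' y a2
          _ = y := hye
      have a4 : y * (δ * ld δ (rd e y)) ≤ e := by
        have := le_rd'.mp (by rwa [← mul_assoc] at a3)
        rwa [← hxy] at this
      have a5 : δ * ld δ (rd e y) ≤ δ := by
        have := le_ld'.mp a4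
        rwa [← hδdef] at this
      have a6 := le_ld'.mp a5
      rwa [hldδδ] at a6
    · apply le_ld'.mp
      apply le_rd'.mp
      calc (δ * e) * y = δ * (e * y) := mul_assoc ..
        _ = δ * y := by rw [hey]
        _ ≤ e := hδy
  -- main chain
  have m1 : ld x (rd x y) = rd e y := by
    rw [← rd_ld_assoc' x x y, hbal x, ← he]
  have m2 : ld (x * δ) (rd x y) = e := by
    rw [ld_ld' x δ (rd x y), m1, hII]
  have m3 : rd (rd x y) e = rd x y := by
    apply le_antisymm
    · calc rd (rd x y) e = rd (rd x y) e * 1 := (mul_one _).symm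
        _ ≤ rd (rd x y) e * e := mono_r' _ (one_le_rd' x)
        _ ≤ rd x y := rd_mul' (rd x y) e
    · apply le_rd'.mp
      apply le_rd'.mp
      calc (rd x y * e) * y = rd x y * (e * y) := mul_assoc ..
        _ = rd x y * y := by rw [hey]
        _ ≤ x := rd_mul' x y
  have m4 := ld_closure' (x * δ) (rd x y)
  rw [m2, m3] at m4
  have m5 : ld (rd x y) (rd x y) = e := m4
  rw [← hbal]
  exact m5

/-- H2 implies H1 -/
private theorem h2_to_h1' (hbal : ∀ a : α, ld a a = rd a a)
    (hH2 : ∀ a b : α, rd a a = rd b b → rd (rd a b) (rd a b) = rd a a)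
    (x y : α) (hxy : rd x x = rd y y) :
    rd (x * y) (x * y) = rd x x := by
  set e := rd x x with he
  set γ := rd e x with hγdef
  have hex : e * x = x := e_mul' x
  have hxe : x * e = x := mul_e' hbal x
  have hee : rd e e = e := rd_e_e' x
  have hγx : γ * x ≤ e := rd_mul' e x
  have hxγ : x * γ ≤ e := by
    apply le_rd'.mp
    calc (x * γ) * x = x * (γ * x) := mul_assoc ..
      _ ≤ x * e := mono_r' x hγx
      _ = x := hxe
  have hγγ : rd γ γ = e := by
    have h := hH2 e x (by rw [hee])
    rw [hee] at h
    exact h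
  have hldγγ : ld γ γ = e := by rw [hbal]; exact hγγ
  -- Claim A : (γ\e)/x = e
  have hA : rd (ld γ e) x = e := by
    apply le_antisymm
    · have a1 : rd (ld γ e) x * x ≤ ld γ e := rd_mul' _ x
      have a2 : γ * (rd (ld γ e) x * x) ≤ e := le_ld'.mpr a1
      have a3 : x * (γ * (rd (ld γ e) x * x)) ≤ x := by
        calc x * (γ * (rd (ld γ e) x * x)) ≤ x * e := mono_r' x a2
          _ = x := hxe
      have a3' : x * ((γ * rd (ld γ e) x) * x) ≤ x := by
        have h : γ * (rd (ld γ e) x * x) = (γ * rd (ld γ e) x) * x := (mul_assoc ..).symm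
        rwa [h] at a3
      have a4 : (γ * rd (ld γ e) x) * x ≤ e := by
        have := le_ld'.mp a3'
        rwa [hbal x] at this
      have a5 : γ * rd (ld γ e) x ≤ γ := by
        have := le_rd'.mp a4
        rwa [← hγdef] at this
      have a6 := le_ld'.mp a5
      rwa [hldγγ] at a6
    · apply le_rd'.mp
      apply le_ld'.mp
      calc γ * (e * x) = γ * x := by rw [hex]
        _ ≤ e := hγx
  -- N = (γ\y)/(x·y) = e
  have hN : rd (ld γ y) (x * y) = e := by
    rw [rd_rd' (ld γ y) x y, rd_ld_assoc' γ y y, ← hxy, hA]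
  have habs := rd_absorb' (ld γ y) (x * y)
  rw [hN] at habs
  have hexy : e * (x * y) = x * y := by
    rw [← mul_assoc, hex]
  rw [hexy] at habs
  exact habs

end RPAux

theorem stmt_10 {α : Type*} [ResiduatedPoset α] (hbal : ∀ x : α, ld x x = rd x x) :
    -- (H2) ⟺ (H3)
    (((∀ x y : α, rd x x = rd y y → rd (rd x y) (rd x y) = rd x x) ↔
      (∀ x y : α, rd x x = rd y y → rd (ld x y) (ld x y) = rd x x))) ∧
    -- (H2) ⟹ (H1)
    ((∀ x y : α, rd x x = rd y y → rd (rd x y) (rd x y) = rd x x) →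
      (∀ x y : α, rd x x = rd y y → rd (x * y) (x * y) = rd x x)) := by
  constructor
  · constructor
    · intro hH2 x y hxy
      exact h2_to_h3' hbal hH2 x y hxy
    · intro hH3 x y hxy
      exact h3_to_h2' hbal hH3 x y hxy
  · intro hH2 x y hxy
    exact h2_to_h1' hbal hH2 x y hxy
end

section
/- Let A be a balanced residuated poset satisfying (H1)–(H3), write 1_x for the common value x\x = x/x, and for each positive idempotent p let A_p = {a ∈ A : 1_a = p}. Then for every positive idempotent p: (i) A_p is closed under ·, \ and /; (ii) p·a = a = a·p for every a ∈ A_p, so A_p with the restricted order and operations and unit p is a residuated poset; (iii) p is the only positive idempotent of A_p, i.e., if a ∈ A_p satisfies p ≤ a and a·a = a, then a = p. -/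
open ResiduatedPoset

theorem stmt_11 {α : Type*} [ResiduatedPoset α] (hbal : ∀ x : α, ld x x = rd x x)
    (hH1 : ∀ x y : α, rd x x = rd y y → rd (x * y) (x * y) = rd x x)
    (hH2 : ∀ x y : α, rd x x = rd y y → rd (rd x y) (rd x y) = rd x x)
    (hH3 : ∀ x y : α, rd x x = rd y y → rd (ld x y) (ld x y) = rd x x)
    (p : α) (hp1 : 1 ≤ p) (hpi : p * p = p) :
    -- (i) A_p is closed under ·, \ and /
    (∀ a b : α, rd a a = p → rd b b = p →
      rd (a * b) (a * b) = p ∧ rd (ld a b) (ld a b) = p ∧ rd (rd a b) (rd a b) = p) ∧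
    -- (ii) p is a two-sided unit on A_p
    (∀ a : α, rd a a = p → p * a = a ∧ a * p = a) ∧
    -- (iii) p is the only positive idempotent of A_p
    (∀ a : α, rd a a = p → p ≤ a → a * a = a → a = p) := by
  -- monotonicity lemmas
  have mul_le_mul_right' : ∀ x y z : α, x ≤ y → x * z ≤ y * z := by
    intro x y z h
    have : y ≤ rd (y * z) z := (mul_le_iff_le_rd y z (y * z)).mp le_rfl
    exact (mul_le_iff_le_rd x z (y * z)).mpr (le_trans h this)
  have mul_le_mul_left' : ∀ x y z : α, x ≤ y → z * x ≤ z * y := by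
    intro x y z h
    have : y ≤ ld z (z * y) := (mul_le_iff_le_ld z y (z * y)).mp le_rfl
    exact (mul_le_iff_le_ld z x (z * y)).mpr (le_trans h this)
  refine ⟨?_, ?_, ?_⟩
  · intro a b ha hb
    exact ⟨(hH1 a b (ha.trans hb.symm)).trans ha,
           (hH3 a b (ha.trans hb.symm)).trans ha,
           (hH2 a b (ha.trans hb.symm)).trans ha⟩
  · intro a ha
    have hpa : p * a ≤ a := by
      have : rd a a ≤ rd a a := le_rfl
      have := (mul_le_iff_le_rd (rd a a) a a).mpr this
      rwa [ha] at this
    have hap : a * p ≤ a := by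
      have : ld a a ≤ ld a a := le_rfl
      have := (mul_le_iff_le_ld a (ld a a) a).mpr this
      rwa [hbal a, ha] at this
    constructor
    · refine le_antisymm hpa ?_
      have := mul_le_mul_right' 1 p a hp1
      rwa [one_mul] at this
    · refine le_antisymm hap ?_
      have := mul_le_mul_left' 1 p a hp1
      rwa [mul_one] at this
  · intro a ha hpa haa
    refine le_antisymm ?_ hpa
    have : a * a ≤ a := le_of_eq haa
    have := (mul_le_iff_le_rd a a a).mp this
    rwa [ha] at this
end

section
/- A balanced residuated poset satisfies the identity 1_x\1 = (1_x\1)\(1_x\1) (for all x) if and only if it satisfies 1_x = 1 (for all x), where 1_x denotes the common value x\x = x/x. In particular, if p is a positive idempotent with p\1 = (p\1)\(p\1), then p = 1. -/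
open ResiduatedPoset

private lemma aux_posidem {α : Type*} [ResiduatedPoset α] (p : α) (h1 : 1 ≤ p)
    (h3 : ld p 1 = ld (ld p 1) (ld p 1)) : p = 1 := by
  set q := ld p 1 with hqdef
  have hq1 : (1:α) ≤ ld q q := (mul_le_iff_le_ld q 1 q).mp (by simp)
  have h1q : (1:α) ≤ q := by rw [h3]; exact hq1
  have hpq : p * q ≤ 1 := (mul_le_iff_le_ld p q 1).mpr le_rfl
  have hp : p ≤ rd 1 q := (mul_le_iff_le_rd p q 1).mp hpq
  have h1rd : (1:α) ≤ rd 1 q := le_trans h1 hp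
  have hq1' : 1 * q ≤ 1 := (mul_le_iff_le_rd 1 q 1).mpr h1rd
  have hqle : q ≤ 1 := by simpa using hq1'
  have hq : q = 1 := le_antisymm hqle h1q
  have hple : p * 1 ≤ 1 := (mul_le_iff_le_ld p 1 1).mpr hq.ge
  exact le_antisymm (by simpa using hple) h1

theorem stmt_13 {α : Type*} [ResiduatedPoset α] (hbal : ∀ x : α, ld x x = rd x x) :
    ((∀ x : α, ld (rd x x) 1 = ld (ld (rd x x) 1) (ld (rd x x) 1)) ↔
      (∀ x : α, rd x x = 1)) ∧
    (∀ p : α, 1 ≤ p → p * p = p → ld p 1 = ld (ld p 1) (ld p 1) → p = 1) := by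
  constructor
  · constructor
    · intro H x
      have h1e : (1:α) ≤ rd x x := (mul_le_iff_le_rd 1 x x).mp (by simp)
      exact aux_posidem (rd x x) h1e (H x)
    · intro h x
      rw [h x]
      have h11 : ld (1:α) 1 = 1 := by rw [hbal 1, h 1]
      rw [h11]; exact h11.symm
  · intro p h1 _ h3
    exact aux_posidem p h1 h3
end

section
/- Let A be a balanced residuated poset satisfying (H5) and (H6), write 1_x for the common value x\x = x/x, and define a ⊗ b = 1_b\a. Then ⊗ is a left normal band, i.e., for all a, b, c ∈ A: a ⊗ a = a, a ⊗ (b ⊗ c) = (a ⊗ b) ⊗ c, and a ⊗ (b ⊗ c) = a ⊗ (c ⊗ b); moreover, ⊗ satisfies condition (PF5) for both residuals: b ⊗ (a₁\a₂) = (b ⊗ a₁) ⊗ a₂ and b ⊗ (a₁/a₂) = (b ⊗ a₁) ⊗ a₂ for all a₁, a₂, b ∈ A. -/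
open ResiduatedPoset

theorem stmt_14 {α : Type*} [ResiduatedPoset α] (hbal : ∀ x : α, ld x x = rd x x)
    (hH5 : ∀ x y : α, rd (ld x y) (ld x y) = rd x x * rd y y)
    (hH6 : ∀ x y : α, rd (rd x y) (rd x y) = rd x x * rd y y)
    (otimes : α → α → α) (hotimes : ∀ a b : α, otimes a b = ld (rd b b) a) :
    (∀ a : α, otimes a a = a) ∧
    (∀ a b c : α, otimes a (otimes b c) = otimes (otimes a b) c) ∧
    (∀ a b c : α, otimes a (otimes b c) = otimes a (otimes c b)) ∧
    (∀ a₁ a₂ b : α, otimes b (ld a₁ a₂) = otimes (otimes b a₁) a₂) ∧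
    (∀ a₁ a₂ b : α, otimes b (rd a₁ a₂) = otimes (otimes b a₁) a₂) := by
  -- basic monotonicity
  have mulL : ∀ x y z : α, x ≤ y → x * z ≤ y * z := by
    intro x y z h
    have hy : y ≤ rd (y * z) z := (mul_le_iff_le_rd y z (y * z)).mp le_rfl
    exact (mul_le_iff_le_rd x z (y * z)).mpr (h.trans hy)
  have mulR : ∀ x y z : α, x ≤ y → z * x ≤ z * y := by
    intro x y z h
    have hy : y ≤ ld z (z * y) := (mul_le_iff_le_ld z y (z * y)).mp le_rfl
    exact (mul_le_iff_le_ld z x (z * y)).mpr (h.trans hy)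
  have mul_ld_le : ∀ x a : α, x * ld x a ≤ a := fun x a =>
    (mul_le_iff_le_ld x (ld x a) a).mpr le_rfl
  have rd_mul_le : ∀ x a : α, rd a x * x ≤ a := fun x a =>
    (mul_le_iff_le_rd (rd a x) x a).mpr le_rfl
  have ld_anti : ∀ u v a : α, u ≤ v → ld v a ≤ ld u a := by
    intro u v a h
    exact (mul_le_iff_le_ld u (ld v a) a).mp ((mulL u v (ld v a) h).trans (mul_ld_le v a))
  have ld_one : ∀ a : α, ld 1 a = a := by
    intro a
    apply le_antisymm
    · have h := mul_ld_le 1 a; rwa [one_mul] at h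
    · exact (mul_le_iff_le_ld 1 a a).mp (by rw [one_mul])
  have ld_mul : ∀ u v a : α, ld (u * v) a = ld v (ld u a) := by
    intro u v a
    apply le_antisymm
    · refine (mul_le_iff_le_ld v _ _).mp ?_
      refine (mul_le_iff_le_ld u _ _).mp ?_
      rw [← mul_assoc]
      exact mul_ld_le (u * v) a
    · refine (mul_le_iff_le_ld (u * v) _ _).mp ?_
      rw [mul_assoc]
      exact (mulR _ _ u (mul_ld_le v (ld u a))).trans (mul_ld_le u a)
  have one_le_e : ∀ x : α, (1 : α) ≤ rd x x := fun x =>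
    (mul_le_iff_le_rd 1 x x).mp (by rw [one_mul])
  -- idempotency of rd x x
  have eIdem : ∀ x : α, rd x x * rd x x = rd x x := by
    intro x
    apply le_antisymm
    · refine (mul_le_iff_le_rd _ x x).mp ?_
      rw [mul_assoc]
      exact (mulR _ _ (rd x x) (rd_mul_le x x)).trans (rd_mul_le x x)
    · have h := mulR 1 (rd x x) (rd x x) (one_le_e x)
      rwa [mul_one] at h
  have eE : ∀ x : α, rd (rd x x) (rd x x) = rd x x := by
    intro x
    apply le_antisymm
    · have h := (mulR 1 (rd x x) (rd (rd x x) (rd x x)) (one_le_e x)).trans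
        (rd_mul_le (rd x x) (rd x x))
      rwa [mul_one] at h
    · exact (mul_le_iff_le_rd _ _ _).mp (le_of_eq (eIdem x))
  -- commutativity of the elements rd x x
  have eComm : ∀ x y : α, rd x x * rd y y = rd y y * rd x x := by
    have key : ∀ x y : α, rd y y * rd x x ≤ rd x x * rd y y := by
      intro x y
      have hid : (rd x x * rd y y) * (rd x x * rd y y) = rd x x * rd y y := by
        rw [← hH5 x y]; exact eIdem (ld x y)
      have h1 : rd x x ≤ rd x x * rd y y := by
        have h := mulR 1 (rd y y) (rd x x) (one_le_e y); rwa [mul_one] at h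
      have h2 : rd y y ≤ rd x x * rd y y := by
        have h := mulL 1 (rd x x) (rd y y) (one_le_e x); rwa [one_mul] at h
      calc rd y y * rd x x ≤ (rd x x * rd y y) * rd x x := mulL _ _ _ h2
        _ ≤ (rd x x * rd y y) * (rd x x * rd y y) := mulR _ _ _ h1
        _ = rd x x * rd y y := hid
    intro x y
    exact le_antisymm (key y x) (key x y)
  -- rd (otimes a b) (otimes a b) = rd b b * rd a a
  have eOt : ∀ a b : α, rd (otimes a b) (otimes a b) = rd b b * rd a a := by
    intro a b
    rw [hotimes a b, hH5 (rd b b) a, eE b]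
  -- the five claims
  refine ⟨?_, ?_, ?_, ?_, ?_⟩
  · intro a
    rw [hotimes a a]
    apply le_antisymm
    · have h := ld_anti 1 (rd a a) a (one_le_e a)
      rwa [ld_one] at h
    · exact (mul_le_iff_le_ld (rd a a) a a).mp (rd_mul_le a a)
  · intro a b c
    rw [hotimes a (otimes b c), eOt b c, hotimes (otimes a b) c, hotimes a b,
      eComm c b, ld_mul]
  · intro a b c
    rw [hotimes a (otimes b c), hotimes a (otimes c b), eOt b c, eOt c b, eComm c b]
  · intro a₁ a₂ b
    rw [hotimes b (ld a₁ a₂), hH5 a₁ a₂,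
      hotimes (otimes b a₁) a₂, hotimes b a₁, ld_mul]
  · intro a₁ a₂ b
    rw [hotimes b (rd a₁ a₂), hH6 a₁ a₂,
      hotimes (otimes b a₁) a₂, hotimes b a₁, ld_mul]
end

section
/- Let A be a balanced residuated poset and p ∈ A a positive idempotent. Then for all a, b ∈ A: p\(a\b) = (p·a)\(p\b) and p\(a/b) = (p\a)/(p·b). -/
open ResiduatedPoset

section aux
variable {α : Type*} [ResiduatedPoset α]

lemma mul_ld_le (x z : α) : x * ld x z ≤ z :=
  (mul_le_iff_le_ld x (ld x z) z).mpr le_rfl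

lemma rd_mul_le (z y : α) : rd z y * y ≤ z :=
  (mul_le_iff_le_rd (rd z y) y z).mpr le_rfl

lemma central (hbal : ∀ x : α, ld x x = rd x x)
    (p : α) (hp1 : 1 ≤ p) (hpi : p * p = p) (x : α) : p * x = x * p := by
  have h1 : (p * x) * p ≤ p * x := by
    have : p * (p * x) ≤ p * x := by rw [← mul_assoc, hpi]
    have hle : p ≤ rd (p * x) (p * x) := (mul_le_iff_le_rd _ _ _).mp this
    rw [← hbal] at hle
    exact (mul_le_iff_le_ld _ _ _).mpr hle
  have h2 : p * (x * p) ≤ x * p := by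
    have : (x * p) * p ≤ x * p := by rw [mul_assoc, hpi]
    have hle : p ≤ ld (x * p) (x * p) := (mul_le_iff_le_ld _ _ _).mp this
    rw [hbal] at hle
    exact (mul_le_iff_le_rd _ _ _).mpr hle
  apply le_antisymm
  · calc p * x = p * (x * 1) := by rw [mul_one]
      _ ≤ p * (x * p) := rp_mul_le_mul_left p (rp_mul_le_mul_left x hp1)
      _ ≤ x * p := h2
  · calc x * p = (1 * x) * p := by rw [one_mul]
      _ ≤ (p * x) * p := rp_mul_le_mul_right p (rp_mul_le_mul_right x hp1)
      _ ≤ p * x := h1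

end aux

theorem stmt_16 {α : Type*} [ResiduatedPoset α] (hbal : ∀ x : α, ld x x = rd x x)
    (p : α) (hp1 : 1 ≤ p) (hpi : p * p = p) (a b : α) :
    ld p (ld a b) = ld (p * a) (ld p b) ∧
    ld p (rd a b) = rd (ld p a) (p * b) := by
  have hc := central hbal p hp1 hpi
  constructor
  · apply le_antisymm
    · set u := ld p (ld a b) with hu
      have hpu : p * u ≤ ld a b := mul_ld_le p (ld a b)
      rw [← mul_le_iff_le_ld, ← mul_le_iff_le_ld]
      have : p * (p * a * u) = a * (p * u) := by
        simp only [← mul_assoc, hpi]; rw [hc a]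
      rw [this]
      exact le_trans (rp_mul_le_mul_left a hpu) (mul_ld_le a b)
    · set v := ld (p * a) (ld p b) with hv
      have hv1 : (p * a) * v ≤ ld p b := mul_ld_le (p * a) (ld p b)
      have hv2 : p * ((p * a) * v) ≤ b :=
        le_trans (rp_mul_le_mul_left p hv1) (mul_ld_le p b)
      rw [← mul_le_iff_le_ld, ← mul_le_iff_le_ld]
      have : a * (p * v) = p * ((p * a) * v) := by
        simp only [← mul_assoc, hpi]; rw [← hc a]
      rw [this]
      exact hv2
  · apply le_antisymm
    · set u := ld p (rd a b) with hu
      have hpu : p * u ≤ rd a b := mul_ld_le p (rd a b)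
      rw [← mul_le_iff_le_rd, ← mul_le_iff_le_ld]
      have : p * (u * (p * b)) = (p * u) * b := by
        rw [show u * (p * b) = p * (u * b) by rw [← mul_assoc, ← hc u, mul_assoc],
          ← mul_assoc, hpi, mul_assoc]
      rw [this]
      exact le_trans (rp_mul_le_mul_right b hpu) (rd_mul_le a b)
    · set v := rd (ld p a) (p * b) with hv
      have hv1 : v * (p * b) ≤ ld p a := rd_mul_le (ld p a) (p * b)
      have hv2 : p * (v * (p * b)) ≤ a :=
        le_trans (rp_mul_le_mul_left p hv1) (mul_ld_le p a)
      rw [← mul_le_iff_le_ld, ← mul_le_iff_le_rd]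
      have : (p * v) * b = p * (v * (p * b)) := by
        rw [show v * (p * b) = p * (v * b) by rw [← mul_assoc, ← hc v, mul_assoc],
          ← mul_assoc, hpi, mul_assoc]
      rw [this]
      exact hv2
end

section
/- Let (I, ∨) be a join semilattice, let (A_p, ≤_p) for p ∈ I be a family of partial orders, and let Φ = {φ_{pq} : A_p → A_q : p ≤ q} and Ψ = {ψ_{pq} : A_p → A_q : p ≤ q} be two semilattice directed systems of monotone maps (φ_{pp} and ψ_{pp} are identities, and φ_{qr} ∘ φ_{pq} = φ_{pr} and ψ_{qr} ∘ ψ_{pq} = ψ_{pr} whenever p ≤ q ≤ r). Define a relation ⊑ on the disjoint union of the A_p by: for a ∈ A_p and b ∈ A_q, a ⊑ b iff φ_{ps}(a) ≤_s ψ_{qs}(b), where s = p ∨ q. Then ⊑ is a partial order whose restriction to each A_p is ≤_p if and only if the pair (Φ, Ψ) satisfies: (O1) if p < q then ψ_{pq}(a) <_q φ_{pq}(a) for all a ∈ A_p; (O2) if p ≤ q, p ≤ r and t = q ∨ r, then φ_{qt}(ψ_{pq}(a)) ≤_t ψ_{rt}(φ_{pr}(a)) for all a ∈ A_p; (O3)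 for all a, b ∈ A_p and p ≤ q, if φ_{pq}(a) ≤_q ψ_{pq}(b) then a ≤_p b. -/
theorem stmt_17 {I : Type*} [SemilatticeSup I] {A : I → Type*} [∀ p, PartialOrder (A p)]
    (φ ψ : ∀ {p q : I}, p ≤ q → A p → A q)
    (hφmono : ∀ {p q : I} (h : p ≤ q), Monotone (φ h))
    (hψmono : ∀ {p q : I} (h : p ≤ q), Monotone (ψ h))
    (hφid : ∀ (p : I) (a : A p), φ (le_refl p) a = a)
    (hψid : ∀ (p : I) (a : A p), ψ (le_refl p) a = a)
    (hφcomp : ∀ {p q r : I} (hpq : p ≤ q) (hqr : q ≤ r) (a : A p),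
      φ hqr (φ hpq a) = φ (hpq.trans hqr) a)
    (hψcomp : ∀ {p q r : I} (hpq : p ≤ q) (hqr : q ≤ r) (a : A p),
      ψ hqr (ψ hpq a) = ψ (hpq.trans hqr) a)
    (rel : (Σ p, A p) → (Σ p, A p) → Prop)
    (hrel : ∀ x y : Σ p, A p,
      rel x y ↔ φ (le_sup_left : x.1 ≤ x.1 ⊔ y.1) x.2 ≤ ψ (le_sup_right : y.1 ≤ x.1 ⊔ y.1) y.2) :
    -- ⊑ is a partial order restricting to ≤_p on each A_p
    (Reflexive rel ∧ Transitive rel ∧ (∀ x y : Σ p, A p, rel x y → rel y x → x = y) ∧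
     (∀ (p : I) (a b : A p), rel ⟨p, a⟩ ⟨p, b⟩ ↔ a ≤ b))
    ↔
    -- (O1) ∧ (O2) ∧ (O3)
    ((∀ {p q : I} (h : p < q) (a : A p), ψ h.le a < φ h.le a) ∧
     (∀ {p q r : I} (hpq : p ≤ q) (hpr : p ≤ r) (a : A p),
        φ (le_sup_left : q ≤ q ⊔ r) (ψ hpq a) ≤ ψ (le_sup_right : r ≤ q ⊔ r) (φ hpr a)) ∧
     (∀ {p q : I} (h : p ≤ q) (a b : A p), φ h a ≤ ψ h b → a ≤ b)) := by
  have idφ : ∀ {p : I} (h : p ≤ p) (a : A p), φ h a = a := fun h a => hφid _ a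
  have idψ : ∀ {p : I} (h : p ≤ p) (a : A p), ψ h a = a := fun h a => hψid _ a
  have compφ : ∀ {p q r : I} (hpq : p ≤ q) (hqr : q ≤ r) (h : p ≤ r) (a : A p),
      φ hqr (φ hpq a) = φ h a := fun hpq hqr h a => hφcomp hpq hqr a
  have compψ : ∀ {p q r : I} (hpq : p ≤ q) (hqr : q ≤ r) (h : p ≤ r) (a : A p),
      ψ hqr (ψ hpq a) = ψ h a := fun hpq hqr h a => hψcomp hpq hqr a
  have cast2 : ∀ {p q s s' : I} (e : s = s') (hp : p ≤ s) (hq : q ≤ s)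
      (hp' : p ≤ s') (hq' : q ≤ s') (x : A p) (y : A q),
      φ hp x ≤ ψ hq y → φ hp' x ≤ ψ hq' y := by
    intro p q s s' e hp hq hp' hq' x y h
    subst e; exact h
  have relψ : ∀ {p q : I} (h : p ≤ q) (a : A p), rel ⟨q, ψ h a⟩ ⟨p, a⟩ := by
    intro p q h a
    rw [hrel]
    apply cast2 (sup_eq_left.mpr h).symm (le_refl q) h
    rw [idφ]
  have relφ : ∀ {p q : I} (h : p ≤ q) (a : A p), rel ⟨p, a⟩ ⟨q, φ h a⟩ := by
    intro p q h a
    rw [hrel]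
    apply cast2 (sup_eq_right.mpr h).symm h (le_refl q)
    rw [idψ]
  have relpp : ∀ (p : I) (a b : A p), rel ⟨p, a⟩ ⟨p, b⟩ ↔ a ≤ b := by
    intro p a b
    rw [hrel]
    constructor
    · intro h
      have := cast2 (sup_idem p) le_sup_left le_sup_right (le_refl p) (le_refl p) a b h
      rwa [idφ, idψ] at this
    · intro h
      apply cast2 (sup_idem p).symm (le_refl p) (le_refl p)
      rwa [idφ, idψ]
  constructor
  · rintro ⟨-, htrans, hanti, -⟩
    refine ⟨?_, ?_, ?_⟩
    · -- O1
      intro p q hlt a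
      have hle : ψ hlt.le a ≤ φ hlt.le a :=
        (relpp q _ _).1 (htrans (relψ hlt.le a) (relφ hlt.le a))
      rcases hle.lt_or_eq with h | heq
      · exact h
      · exfalso
        have h4 : rel ⟨p, a⟩ ⟨q, ψ hlt.le a⟩ := by
          rw [hrel]
          apply cast2 (sup_eq_right.mpr hlt.le).symm hlt.le (le_refl q)
          rw [idψ, heq]
        exact hlt.ne (congrArg Sigma.fst (hanti _ _ h4 (relψ hlt.le a)))
    · -- O2
      intro p q r hpq hpr a
      exact (hrel _ _).1 (htrans (relψ hpq a) (relφ hpr a))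
    · -- O3
      intro p q h a b hab
      have h1 : rel ⟨p, a⟩ ⟨q, ψ h b⟩ := by
        rw [hrel]
        apply cast2 (sup_eq_right.mpr h).symm h (le_refl q)
        rwa [idψ]
      exact (relpp p a b).1 (htrans h1 (relψ h b))
  · rintro ⟨O1, O2, O3⟩
    refine ⟨?_, ?_, ?_, fun p a b => relpp p a b⟩
    · rintro ⟨p, a⟩
      exact (relpp p a a).2 le_rfl
    · rintro ⟨p, a⟩ ⟨q, b⟩ ⟨r, c⟩ hab hbc
      rw [hrel] at hab hbc ⊢
      have hsw : p ⊔ q ≤ (p ⊔ q) ⊔ (q ⊔ r) := le_sup_left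
      have huw : q ⊔ r ≤ (p ⊔ q) ⊔ (q ⊔ r) := le_sup_right
      have hpw : p ≤ (p ⊔ q) ⊔ (q ⊔ r) := le_sup_left.trans hsw
      have hrw : r ≤ (p ⊔ q) ⊔ (q ⊔ r) := le_sup_right.trans huw
      have hvw : p ⊔ r ≤ (p ⊔ q) ⊔ (q ⊔ r) := sup_le hpw hrw
      have step1 : φ hpw a ≤ ψ hrw c := by
        calc φ hpw a = φ hsw (φ le_sup_left a) := (compφ _ _ _ _).symm
          _ ≤ φ hsw (ψ le_sup_right b) := hφmono hsw hab
          _ ≤ ψ huw (φ le_sup_left b) := O2 le_sup_right le_sup_left b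
          _ ≤ ψ huw (ψ le_sup_right c) := hψmono huw hbc
          _ = ψ hrw c := compψ _ _ _ _
      have step2 : φ hvw (φ le_sup_left a) ≤ ψ hvw (ψ le_sup_right c) := by
        rw [compφ _ _ hpw, compψ _ _ hrw]; exact step1
      exact O3 hvw _ _ step2
    · rintro ⟨p, a⟩ ⟨q, b⟩ h1 h2
      rw [hrel] at h1 h2
      have h2' : φ (le_sup_right : q ≤ p ⊔ q) b ≤ ψ (le_sup_left : p ≤ p ⊔ q) a :=
        cast2 (sup_comm q p) _ _ _ _ _ _ h2
      have hpq : p = q := by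
        by_contra hne
        rcases (le_sup_left : p ≤ p ⊔ q).lt_or_eq with hp | hp
        · rcases (le_sup_right : q ≤ p ⊔ q).lt_or_eq with hq | hq
          · exact absurd (((h1.trans_lt (O1 hq b)).trans_le h2').trans (O1 hp a)) (lt_irrefl _)
          · have hplt : p < q := hq ▸ hp
            have h1' : φ hplt.le a ≤ ψ (le_refl q) b := cast2 hq.symm _ _ _ _ _ _ h1
            have h2'' : φ (le_refl q) b ≤ ψ hplt.le a := cast2 hq.symm _ _ _ _ _ _ h2'
            rw [idψ] at h1'
            rw [idφ] at h2''
            exact absurd ((h1'.trans h2'').trans_lt (O1 hplt a)) (lt_irrefl _)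
        · have hqp : q ≤ p := le_sup_right.trans_eq hp.symm
          have hqlt : q < p := hqp.lt_of_ne fun e => hne e.symm
          have h1' : φ (le_refl p) a ≤ ψ hqp b := cast2 hp.symm _ _ _ _ _ _ h1
          have h2'' : φ hqp b ≤ ψ (le_refl p) a := cast2 hp.symm _ _ _ _ _ _ h2'
          rw [idφ] at h1'
          rw [idψ] at h2''
          exact absurd ((h2''.trans h1').trans_lt (O1 hqlt b)) (lt_irrefl _)
      subst hpq
      have hab : a ≤ b := by
        have := cast2 (sup_idem p) _ _ (le_refl p) (le_refl p) _ _ h1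
        rwa [idφ, idψ] at this
      have hba : b ≤ a := by
        have := cast2 (sup_idem p) _ _ (le_refl p) (le_refl p) _ _ h2'
        rwa [idφ, idψ] at this
      exact congrArg (Sigma.mk p) (le_antisymm hab hba)
end

section
/- Let (I, ∨) be a join semilattice with least element ⊥, and let (A_p, ≤_p, ·_p, \_p, /_p, 1_p) for p ∈ I be a family of residuated posets. Let Φ = {φ_{pq} : A_p → A_q : p ≤ q} and Ψ = {ψ_{pq} : A_p → A_q : p ≤ q} be two semilattice directed systems of monotone maps such that each φ_{pq} is a monoid homomorphism, ψ_{pq}(a \_p b) = φ_{pq}(a) \_q ψ_{pq}(b) and ψ_{pq}(a /_p b) = ψ_{pq}(a) /_q φ_{pq}(b) for all a, b ∈ A_p, and the pair (Φ, Ψ) satisfies (O1)–(O3). Define on the disjoint union S = Σ_{p ∈ I} A_p: the order a ≤ b iff φ_{ps}(a) ≤_s ψ_{qs}(b) where a ∈ A_p, b ∈ A_q, s = p ∨ q; the product a·b = φ_{ps}(a) ·_s φ_{qs}(b); the unit 1 = 1_⊥ ∈ A_⊥; and the residuals a\b = φ_{ps}(a) \_s ψ_{qs}(b) and a/b = ψ_{ps}(a)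 /_s φ_{qs}(b). Then (S, ≤, ·, \, /, 1) is a residuated poset: ≤ is a partial order, (S, ·, 1) is a monoid, and a·b ≤ c ⟺ a ≤ c/b ⟺ b ≤ a\c for all a, b, c ∈ S. -/
open ResiduatedPoset

theorem sigma_mk_eq_mk_map {I : Type*} [Preorder I] {A : I → Type*}
    {φ : ∀ {p q : I}, p ≤ q → A p → A q} (hφid : ∀ (p : I) (a : A p), φ (le_refl p) a = a)
    {s t : I} (e : s = t) (a : A s) : (⟨s, a⟩ : Σ p, A p) = ⟨t, φ e.le a⟩ := by
  subst e
  rw [hφid]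

section

variable {I : Type*} [SemilatticeSup I] {A : I → Type*} [∀ p, ResiduatedPoset (A p)]
  (φ ψ : ∀ {p q : I}, p ≤ q → A p → A q)

def sigmaLE (x y : Σ p, A p) : Prop :=
  φ (le_sup_left : x.1 ≤ x.1 ⊔ y.1) x.2 ≤ ψ (le_sup_right : y.1 ≤ x.1 ⊔ y.1) y.2

def sigmaMul (x y : Σ p, A p) : Σ p, A p :=
  ⟨x.1 ⊔ y.1, φ (le_sup_left : x.1 ≤ x.1 ⊔ y.1) x.2 * φ (le_sup_right : y.1 ≤ x.1 ⊔ y.1) y.2⟩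

def sigmaLd (x y : Σ p, A p) : Σ p, A p :=
  ⟨x.1 ⊔ y.1, ld (φ (le_sup_left : x.1 ≤ x.1 ⊔ y.1) x.2) (ψ (le_sup_right : y.1 ≤ x.1 ⊔ y.1) y.2)⟩

def sigmaRd (x y : Σ p, A p) : Σ p, A p :=
  ⟨x.1 ⊔ y.1, rd (ψ (le_sup_left : x.1 ≤ x.1 ⊔ y.1) x.2) (φ (le_sup_right : y.1 ≤ x.1 ⊔ y.1) y.2)⟩

variable {φ ψ}

theorem sigmaLE_mk {p q : I} (a : A p) (b : A q) :
    sigmaLE φ ψ ⟨p, a⟩ ⟨q, b⟩ ↔ φ (le_sup_left : p ≤ p ⊔ q) a ≤ ψ (le_sup_right : q ≤ p ⊔ q) b :=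
  Iff.rfl

theorem sigmaMul_mk {p q : I} (a : A p) (b : A q) :
    sigmaMul φ ⟨p, a⟩ ⟨q, b⟩ =
      ⟨p ⊔ q, φ (le_sup_left : p ≤ p ⊔ q) a * φ (le_sup_right : q ≤ p ⊔ q) b⟩ :=
  rfl

theorem sigmaLd_mk {p q : I} (a : A p) (b : A q) :
    sigmaLd φ ψ ⟨p, a⟩ ⟨q, b⟩ =
      ⟨p ⊔ q, ld (φ (le_sup_left : p ≤ p ⊔ q) a) (ψ (le_sup_right : q ≤ p ⊔ q) b)⟩ :=
  rfl

theorem sigmaRd_mk {p q : I} (a : A p) (b : A q) :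
    sigmaRd φ ψ ⟨p, a⟩ ⟨q, b⟩ =
      ⟨p ⊔ q, rd (ψ (le_sup_left : p ≤ p ⊔ q) a) (φ (le_sup_right : q ≤ p ⊔ q) b)⟩ :=
  rfl

/-- Comparing at an index only propositionally equal to `p ⊔ q` avoids rewriting the index
inside the dependent types `A _`. -/
theorem sigmaLE_mk_iff_of_sup_eq {p q t : I} (a : A p) (b : A q) (hp : p ≤ t) (hq : q ≤ t)
    (ht : p ⊔ q = t) : sigmaLE φ ψ ⟨p, a⟩ ⟨q, b⟩ ↔ φ hp a ≤ ψ hq b := by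
  subst ht
  rfl

theorem sigmaLE_refl (hφid : ∀ (p : I) (a : A p), φ (le_refl p) a = a)
    (hψid : ∀ (p : I) (a : A p), ψ (le_refl p) a = a) (x : Σ p, A p) : sigmaLE φ ψ x x := by
  rw [sigmaLE_mk_iff_of_sup_eq x.2 x.2 le_rfl le_rfl (sup_idem x.1), hφid, hψid]

theorem map_le_map_of_sigmaLE_of_sigmaLE
    (hφmono : ∀ {p q : I} (h : p ≤ q), Monotone (φ h))
    (hψmono : ∀ {p q : I} (h : p ≤ q), Monotone (ψ h))
    (hφcomp : ∀ {p q r : I} (hpq : p ≤ q) (hqr : q ≤ r) (a : A p),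
      φ hqr (φ hpq a) = φ (hpq.trans hqr) a)
    (hψcomp : ∀ {p q r : I} (hpq : p ≤ q) (hqr : q ≤ r) (a : A p),
      ψ hqr (ψ hpq a) = ψ (hpq.trans hqr) a)
    (hO2 : ∀ {p q r : I} (hpq : p ≤ q) (hpr : p ≤ r) (a : A p),
      φ (le_sup_left : q ≤ q ⊔ r) (ψ hpq a) ≤ ψ (le_sup_right : r ≤ q ⊔ r) (φ hpr a))
    {p q r : I} {a : A p} {b : A q} {c : A r}
    (hab : sigmaLE φ ψ ⟨p, a⟩ ⟨q, b⟩) (hbc : sigmaLE φ ψ ⟨q, b⟩ ⟨r, c⟩) :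
    φ (le_sup_left.trans le_sup_left : p ≤ (p ⊔ q) ⊔ (q ⊔ r)) a ≤
      ψ (le_sup_right.trans le_sup_right : r ≤ (p ⊔ q) ⊔ (q ⊔ r)) c := by
  have hab' := hφmono (le_sup_left : p ⊔ q ≤ (p ⊔ q) ⊔ (q ⊔ r)) hab
  have hbc' := hψmono (le_sup_right : q ⊔ r ≤ (p ⊔ q) ⊔ (q ⊔ r)) hbc
  rw [hφcomp] at hab'
  rw [hψcomp] at hbc'
  exact hab'.trans ((hO2 le_sup_right le_sup_left b).trans hbc')

theorem sigmaLE_trans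
    (hφmono : ∀ {p q : I} (h : p ≤ q), Monotone (φ h))
    (hψmono : ∀ {p q : I} (h : p ≤ q), Monotone (ψ h))
    (hφcomp : ∀ {p q r : I} (hpq : p ≤ q) (hqr : q ≤ r) (a : A p),
      φ hqr (φ hpq a) = φ (hpq.trans hqr) a)
    (hψcomp : ∀ {p q r : I} (hpq : p ≤ q) (hqr : q ≤ r) (a : A p),
      ψ hqr (ψ hpq a) = ψ (hpq.trans hqr) a)
    (hO2 : ∀ {p q r : I} (hpq : p ≤ q) (hpr : p ≤ r) (a : A p),
      φ (le_sup_left : q ≤ q ⊔ r) (ψ hpq a) ≤ ψ (le_sup_right : r ≤ q ⊔ r) (φ hpr a))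
    (hO3 : ∀ {p q : I} (h : p ≤ q) (a b : A p), φ h a ≤ ψ h b → a ≤ b)
    {x y z : Σ p, A p} (hxy : sigmaLE φ ψ x y) (hyz : sigmaLE φ ψ y z) : sigmaLE φ ψ x z := by
  obtain ⟨p, a⟩ := x
  obtain ⟨q, b⟩ := y
  obtain ⟨r, c⟩ := z
  have hpr : p ⊔ r ≤ (p ⊔ q) ⊔ (q ⊔ r) :=
    sup_le (le_sup_left.trans le_sup_left) (le_sup_right.trans le_sup_right)
  refine hO3 hpr _ _ ?_
  rw [hφcomp, hψcomp]
  exact map_le_map_of_sigmaLE_of_sigmaLE hφmono hψmono hφcomp hψcomp hO2 hxy hyz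

theorem eq_of_map_le_map (hO1 : ∀ {p q : I} (h : p < q) (a : A p), ψ h.le a < φ h.le a)
    {p t : I} (h : p ≤ t) {a : A p} (ha : φ h a ≤ ψ h a) : p = t :=
  h.eq_of_not_lt fun hlt => (ha.trans_lt (hO1 hlt a)).false

theorem sigmaLE_antisymm
    (hφmono : ∀ {p q : I} (h : p ≤ q), Monotone (φ h))
    (hψmono : ∀ {p q : I} (h : p ≤ q), Monotone (ψ h))
    (hφcomp : ∀ {p q r : I} (hpq : p ≤ q) (hqr : q ≤ r) (a : A p),
      φ hqr (φ hpq a) = φ (hpq.trans hqr) a)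
    (hψcomp : ∀ {p q r : I} (hpq : p ≤ q) (hqr : q ≤ r) (a : A p),
      ψ hqr (ψ hpq a) = ψ (hpq.trans hqr) a)
    (hO1 : ∀ {p q : I} (h : p < q) (a : A p), ψ h.le a < φ h.le a)
    (hO2 : ∀ {p q r : I} (hpq : p ≤ q) (hpr : p ≤ r) (a : A p),
      φ (le_sup_left : q ≤ q ⊔ r) (ψ hpq a) ≤ ψ (le_sup_right : r ≤ q ⊔ r) (φ hpr a))
    (hO3 : ∀ {p q : I} (h : p ≤ q) (a b : A p), φ h a ≤ ψ h b → a ≤ b)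
    {x y : Σ p, A p} (hxy : sigmaLE φ ψ x y) (hyx : sigmaLE φ ψ y x) : x = y := by
  obtain ⟨p, a⟩ := x
  obtain ⟨q, b⟩ := y
  have hp := eq_of_map_le_map hO1 _
    (map_le_map_of_sigmaLE_of_sigmaLE hφmono hψmono hφcomp hψcomp hO2 hxy hyx)
  have hq := eq_of_map_le_map hO1 _
    (map_le_map_of_sigmaLE_of_sigmaLE hφmono hψmono hφcomp hψcomp hO2 hyx hxy)
  obtain rfl : p = q :=
    le_antisymm (hq ▸ le_sup_right.trans le_sup_left) (hp ▸ le_sup_right.trans le_sup_left)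
  exact congrArg (Sigma.mk p) (le_antisymm (hO3 _ _ _ hxy) (hO3 _ _ _ hyx))

theorem sigmaMul_assoc (hφid : ∀ (p : I) (a : A p), φ (le_refl p) a = a)
    (hφcomp : ∀ {p q r : I} (hpq : p ≤ q) (hqr : q ≤ r) (a : A p),
      φ hqr (φ hpq a) = φ (hpq.trans hqr) a)
    (hφmul : ∀ {p q : I} (h : p ≤ q) (a b : A p), φ h (a * b) = φ h a * φ h b)
    (x y z : Σ p, A p) : sigmaMul φ (sigmaMul φ x y) z = sigmaMul φ x (sigmaMul φ y z) := by
  obtain ⟨p, a⟩ := x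
  obtain ⟨q, b⟩ := y
  obtain ⟨r, c⟩ := z
  rw [sigmaMul_mk, sigmaMul_mk, sigmaMul_mk, sigmaMul_mk,
    sigma_mk_eq_mk_map hφid (sup_assoc p q r)]
  simp only [hφmul, hφcomp, mul_assoc]

theorem sigmaMul_le_iff_le_sigmaRd
    (hφcomp : ∀ {p q r : I} (hpq : p ≤ q) (hqr : q ≤ r) (a : A p),
      φ hqr (φ hpq a) = φ (hpq.trans hqr) a)
    (hψcomp : ∀ {p q r : I} (hpq : p ≤ q) (hqr : q ≤ r) (a : A p),
      ψ hqr (ψ hpq a) = ψ (hpq.trans hqr) a)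
    (hφmul : ∀ {p q : I} (h : p ≤ q) (a b : A p), φ h (a * b) = φ h a * φ h b)
    (hψrd : ∀ {p q : I} (h : p ≤ q) (a b : A p), ψ h (rd a b) = rd (ψ h a) (φ h b))
    (x y z : Σ p, A p) : sigmaLE φ ψ (sigmaMul φ x y) z ↔ sigmaLE φ ψ x (sigmaRd φ ψ z y) := by
  obtain ⟨p, a⟩ := x
  obtain ⟨q, b⟩ := y
  obtain ⟨r, c⟩ := z
  rw [sigmaMul_mk, sigmaRd_mk, sigmaLE_mk,
    sigmaLE_mk_iff_of_sup_eq (t := p ⊔ q ⊔ r) a _ (le_sup_left.trans le_sup_left)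
      (sup_le le_sup_right (le_sup_right.trans le_sup_left)) (by rw [sup_comm r, sup_assoc])]
  simp only [hφmul, hφcomp, hψcomp, hψrd]
  exact mul_le_iff_le_rd _ _ _

theorem sigmaMul_le_iff_le_sigmaLd
    (hφcomp : ∀ {p q r : I} (hpq : p ≤ q) (hqr : q ≤ r) (a : A p),
      φ hqr (φ hpq a) = φ (hpq.trans hqr) a)
    (hψcomp : ∀ {p q r : I} (hpq : p ≤ q) (hqr : q ≤ r) (a : A p),
      ψ hqr (ψ hpq a) = ψ (hpq.trans hqr) a)
    (hφmul : ∀ {p q : I} (h : p ≤ q) (a b : A p), φ h (a * b) = φ h a * φ h b)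
    (hψld : ∀ {p q : I} (h : p ≤ q) (a b : A p), ψ h (ld a b) = ld (φ h a) (ψ h b))
    (x y z : Σ p, A p) : sigmaLE φ ψ (sigmaMul φ x y) z ↔ sigmaLE φ ψ y (sigmaLd φ ψ x z) := by
  obtain ⟨p, a⟩ := x
  obtain ⟨q, b⟩ := y
  obtain ⟨r, c⟩ := z
  rw [sigmaMul_mk, sigmaLd_mk, sigmaLE_mk,
    sigmaLE_mk_iff_of_sup_eq (t := p ⊔ q ⊔ r) b _ (le_sup_right.trans le_sup_left)
      (sup_le (le_sup_left.trans le_sup_left) le_sup_right) (by rw [sup_left_comm, sup_assoc])]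
  simp only [hφmul, hφcomp, hψcomp, hψld]
  exact mul_le_iff_le_ld _ _ _

theorem one_sigmaMul [OrderBot I] (hφid : ∀ (p : I) (a : A p), φ (le_refl p) a = a)
    (hφcomp : ∀ {p q r : I} (hpq : p ≤ q) (hqr : q ≤ r) (a : A p),
      φ hqr (φ hpq a) = φ (hpq.trans hqr) a)
    (hφone : ∀ {p q : I} (h : p ≤ q), φ h (1 : A p) = 1)
    (x : Σ p, A p) : sigmaMul φ ⟨⊥, 1⟩ x = x := by
  obtain ⟨p, a⟩ := x
  rw [sigmaMul_mk, sigma_mk_eq_mk_map hφid (bot_sup_eq p)]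
  simp only [hφcomp, hφone, one_mul, hφid]

theorem sigmaMul_one [OrderBot I] (hφid : ∀ (p : I) (a : A p), φ (le_refl p) a = a)
    (hφcomp : ∀ {p q r : I} (hpq : p ≤ q) (hqr : q ≤ r) (a : A p),
      φ hqr (φ hpq a) = φ (hpq.trans hqr) a)
    (hφone : ∀ {p q : I} (h : p ≤ q), φ h (1 : A p) = 1)
    (x : Σ p, A p) : sigmaMul φ x ⟨⊥, 1⟩ = x := by
  obtain ⟨p, a⟩ := x
  rw [sigmaMul_mk, sigma_mk_eq_mk_map hφid (sup_bot_eq p)]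
  simp only [hφcomp, hφone, mul_one, hφid]

end

theorem stmt_19 {I : Type*} [SemilatticeSup I] [OrderBot I]
    {A : I → Type*} [∀ p, ResiduatedPoset (A p)]
    (φ ψ : ∀ {p q : I}, p ≤ q → A p → A q)
    (hφmono : ∀ {p q : I} (h : p ≤ q), Monotone (φ h))
    (hψmono : ∀ {p q : I} (h : p ≤ q), Monotone (ψ h))
    (hφid : ∀ (p : I) (a : A p), φ (le_refl p) a = a)
    (hψid : ∀ (p : I) (a : A p), ψ (le_refl p) a = a)
    (hφcomp : ∀ {p q r : I} (hpq : p ≤ q) (hqr : q ≤ r) (a : A p),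
      φ hqr (φ hpq a) = φ (hpq.trans hqr) a)
    (hψcomp : ∀ {p q r : I} (hpq : p ≤ q) (hqr : q ≤ r) (a : A p),
      ψ hqr (ψ hpq a) = ψ (hpq.trans hqr) a)
    -- each φ_{pq} is a monoid homomorphism
    (hφone : ∀ {p q : I} (h : p ≤ q), φ h (1 : A p) = 1)
    (hφmul : ∀ {p q : I} (h : p ≤ q) (a b : A p), φ h (a * b) = φ h a * φ h b)
    -- ψ interacts with the residuals
    (hψld : ∀ {p q : I} (h : p ≤ q) (a b : A p), ψ h (ld a b) = ld (φ h a) (ψ h b))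
    (hψrd : ∀ {p q : I} (h : p ≤ q) (a b : A p), ψ h (rd a b) = rd (ψ h a) (φ h b))
    -- (O1), (O2), (O3)
    (hO1 : ∀ {p q : I} (h : p < q) (a : A p), ψ h.le a < φ h.le a)
    (hO2 : ∀ {p q r : I} (hpq : p ≤ q) (hpr : p ≤ r) (a : A p),
      φ (le_sup_left : q ≤ q ⊔ r) (ψ hpq a) ≤ ψ (le_sup_right : r ≤ q ⊔ r) (φ hpr a))
    (hO3 : ∀ {p q : I} (h : p ≤ q) (a b : A p), φ h a ≤ ψ h b → a ≤ b)
    -- the order, product, unit and residuals on the disjoint union S = Σ p, A p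
    (rel : (Σ p, A p) → (Σ p, A p) → Prop)
    (hrel : ∀ x y : Σ p, A p,
      rel x y ↔ φ (le_sup_left : x.1 ≤ x.1 ⊔ y.1) x.2 ≤ ψ (le_sup_right : y.1 ≤ x.1 ⊔ y.1) y.2)
    (smul : (Σ p, A p) → (Σ p, A p) → Σ p, A p)
    (hsmul : ∀ x y : Σ p, A p, smul x y =
      ⟨x.1 ⊔ y.1, φ (le_sup_left : x.1 ≤ x.1 ⊔ y.1) x.2 * φ (le_sup_right : y.1 ≤ x.1 ⊔ y.1) y.2⟩)
    (sone : Σ p, A p) (hsone : sone = ⟨⊥, (1 : A ⊥)⟩)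
    (sld : (Σ p, A p) → (Σ p, A p) → Σ p, A p)
    (hsld : ∀ x y : Σ p, A p, sld x y =
      ⟨x.1 ⊔ y.1, ld (φ (le_sup_left : x.1 ≤ x.1 ⊔ y.1) x.2) (ψ (le_sup_right : y.1 ≤ x.1 ⊔ y.1) y.2)⟩)
    (srd : (Σ p, A p) → (Σ p, A p) → Σ p, A p)
    (hsrd : ∀ x y : Σ p, A p, srd x y =
      ⟨x.1 ⊔ y.1, rd (ψ (le_sup_left : x.1 ≤ x.1 ⊔ y.1) x.2) (φ (le_sup_right : y.1 ≤ x.1 ⊔ y.1) y.2)⟩) :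
    -- ≤ is a partial order
    (Reflexive rel ∧ Transitive rel ∧ (∀ x y : Σ p, A p, rel x y → rel y x → x = y)) ∧
    -- (S, ·, 1) is a monoid
    ((∀ x y z : Σ p, A p, smul (smul x y) z = smul x (smul y z)) ∧
     (∀ x : Σ p, A p, smul sone x = x) ∧
     (∀ x : Σ p, A p, smul x sone = x)) ∧
    -- residuation law
    (∀ x y z : Σ p, A p,
      (rel (smul x y) z ↔ rel x (srd z y)) ∧ (rel (smul x y) z ↔ rel y (sld x z))) := by
  obtain rfl : rel = sigmaLE φ ψ := funext₂ fun x y => propext (hrel x y)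
  obtain rfl : smul = sigmaMul φ := funext₂ hsmul
  obtain rfl : sld = sigmaLd φ ψ := funext₂ hsld
  obtain rfl : srd = sigmaRd φ ψ := funext₂ hsrd
  subst hsone
  refine ⟨⟨sigmaLE_refl hφid hψid, ?_, ?_⟩, ⟨?_, ?_, ?_⟩, ?_⟩
  · exact fun _ _ _ => sigmaLE_trans hφmono hψmono hφcomp hψcomp hO2 hO3
  · exact fun _ _ => sigmaLE_antisymm hφmono hψmono hφcomp hψcomp hO1 hO2 hO3
  · exact sigmaMul_assoc hφid hφcomp hφmul
  · exact one_sigmaMul hφid hφcomp hφone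
  · exact sigmaMul_one hφid hφcomp hφone
  · exact fun x y z => ⟨sigmaMul_le_iff_le_sigmaRd hφcomp hψcomp hφmul hψrd x y z,
      sigmaMul_le_iff_le_sigmaLd hφcomp hψcomp hφmul hψld x y z⟩
end
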